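/- arXiv:1612.02723 — 6 statements merged into one kernel-verified Lean document; each statement's English description precedes it below -/
import Mathlib

section
/- Let R be a commutative ring and I ⊆ R an ideal containing a nonzerodivisor. Then the trace ideal tr(I), defined as the sum of the images φ(I) over all R-module homomorphisms φ : I → R, equals I · I⁻¹, where I⁻¹ = {x ∈ Q(R) : xI ⊆ R} and Q(R) is the total ring of fractions of R. -/
/-!
For a nonzerodivisor `d ∈ I`, the identity `a · φ(b) = φ(a · b) = b · φ(a)` shows that every
`φ : I → R` is multiplication by the fraction `φ(d) / d`, which lies in `I⁻¹`; so `φ(I) ⊆ I · I⁻¹`.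
Conversely, multiplication by any `x ∈ I⁻¹` maps `I` into `R`, so `a · x` is a value of a
homomorphism `I → R` for every `a ∈ I`.
-/

open nonZeroDivisors

/-- The trace ideal of an `R`-module `M`: the sum of the images of all
`R`-linear maps `M → R`. -/
def traceIdeal (R : Type*) [CommRing R] (M : Type*) [AddCommGroup M] [Module R M] : Ideal R :=
  ⨆ φ : M →ₗ[R] R, LinearMap.range φ

theorem LinearMap.range_le_traceIdeal {R : Type*} [CommRing R] {M : Type*} [AddCommGroup M]
    [Module R M] (φ : M →ₗ[R] R) : LinearMap.range φ ≤ traceIdeal R M :=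
  le_iSup (fun ψ : M →ₗ[R] R => LinearMap.range ψ) φ

namespace Ideal

variable {R : Type*} [CommRing R] {I : Ideal R}

theorem mul_apply_comm (φ : I →ₗ[R] R) (a b : I) : (a : R) * φ b = (b : R) * φ a := by
  rw [← smul_eq_mul, ← φ.map_smul, ← smul_eq_mul, ← φ.map_smul]
  exact congrArg φ (Subtype.ext (mul_comm _ _))

section Localization

variable {M : Submonoid R} {S : Type*} [CommRing S] [Algebra R S] [IsLocalization M S]

theorem exists_algebraMap_apply_eq_mul (φ : I →ₗ[R] R) {d : R} (hdI : d ∈ I) (hdM : d ∈ M) :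
    ∃ x : S, ∀ b : I, algebraMap R S (φ b) = algebraMap R S b * x :=
  ⟨IsLocalization.mk' S (φ ⟨d, hdI⟩) ⟨d, hdM⟩, fun b => by
    rw [IsLocalization.mul_mk'_eq_mk'_of_mul, ← mul_apply_comm φ ⟨d, hdI⟩ b]
    exact (IsLocalization.mk'_mul_cancel_left _ ⟨d, hdM⟩).symm⟩

theorem map_traceIdeal_le_mul_one_div {d : R} (hdI : d ∈ I) (hdM : d ∈ M) :
    Submodule.map (Algebra.linearMap R S) (traceIdeal R I) ≤
      Submodule.map (Algebra.linearMap R S) I *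
        (1 / Submodule.map (Algebra.linearMap R S) I) := by
  rw [traceIdeal, Submodule.map_iSup]
  refine iSup_le fun φ => ?_
  rintro _ ⟨_, ⟨a, rfl⟩, rfl⟩
  obtain ⟨x, hx⟩ := exists_algebraMap_apply_eq_mul (S := S) φ hdI hdM
  have hx_mem : x ∈ 1 / Submodule.map (Algebra.linearMap R S) I := by
    rw [Submodule.mem_div_iff_forall_mul_mem]
    rintro _ ⟨b, hb, rfl⟩
    rw [Algebra.linearMap_apply, mul_comm, ← hx ⟨b, hb⟩]
    exact Submodule.algebraMap_mem _
  rw [Algebra.linearMap_apply, hx a]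
  exact Submodule.mul_mem_mul (Submodule.mem_map_of_mem a.2) hx_mem

end Localization

variable {S : Type*} [CommRing S] [Algebra R S]

theorem exists_linearMap_of_mem_one_div (hinj : Function.Injective (algebraMap R S)) {x : S}
    (hx : x ∈ 1 / Submodule.map (Algebra.linearMap R S) I) :
    ∃ φ : I →ₗ[R] R, ∀ b : I, algebraMap R S (φ b) = algebraMap R S b * x := by
  let g : I →ₗ[R] S := (LinearMap.mulRight R x).comp ((Algebra.linearMap R S).comp I.subtype)
  have hg : ∀ b, g b ∈ LinearMap.range (Algebra.linearMap R S) := fun b => by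
    rw [← Submodule.one_eq_range, LinearMap.comp_apply, LinearMap.mulRight_apply, mul_comm]
    exact (Submodule.mem_div_iff_forall_mul_mem.mp hx) _ (Submodule.mem_map_of_mem b.2)
  let e := LinearEquiv.ofInjective (Algebra.linearMap R S) hinj
  refine ⟨e.symm.toLinearMap ∘ₗ g.codRestrict _ hg, fun b => ?_⟩
  exact congrArg Subtype.val (e.apply_symm_apply (g.codRestrict _ hg b))

theorem mul_one_div_le_map_traceIdeal (hinj : Function.Injective (algebraMap R S)) :
    Submodule.map (Algebra.linearMap R S) I * (1 / Submodule.map (Algebra.linearMap R S) I) ≤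
      Submodule.map (Algebra.linearMap R S) (traceIdeal R I) := by
  rw [Submodule.mul_le]
  rintro _ ⟨a, ha, rfl⟩ x hx
  obtain ⟨φ, hφ⟩ := exists_linearMap_of_mem_one_div hinj hx
  rw [Algebra.linearMap_apply, ← hφ ⟨a, ha⟩]
  exact Submodule.mem_map_of_mem (φ.range_le_traceIdeal (LinearMap.mem_range_self φ _))

end Ideal

/-- If `I` is an ideal of `R` containing a nonzerodivisor, then `tr(I) = I · I⁻¹`,
where `I⁻¹ = {x ∈ Q(R) : x·I ⊆ R}` is computed in the total ring of fractions `Q(R)`.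
The equality is stated as an equality of `R`-submodules of `Q(R)`, identifying an
ideal of `R` with its image in `Q(R)`. -/
theorem trace_eq_mul_inv (R : Type*) [CommRing R] (I : Ideal R)
    (h : ∃ x ∈ I, x ∈ R⁰) :
    Submodule.map (Algebra.linearMap R (FractionRing R)) (traceIdeal R I) =
      Submodule.map (Algebra.linearMap R (FractionRing R)) I *
        (1 / Submodule.map (Algebra.linearMap R (FractionRing R)) I) := by
  obtain ⟨d, hdI, hd⟩ := h
  exact le_antisymm (Ideal.map_traceIdeal_le_mul_one_div hdI hd)
    (Ideal.mul_one_div_le_map_traceIdeal (IsFractionRing.injective R _))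
end

section
/- Let R be a commutative ring and I, J ideals of R each containing a nonzerodivisor. Then tr(I)·tr(J) ⊆ tr(I·J) ⊆ tr(I) ∩ tr(J). -/
/-!
A functional `φ : I → R` maps `I * J` into `J`, because `φ (a * b) = b * φ a`; composing with
`ψ : J → R` gives a functional on `I * J` sending `a * b` to `φ a * ψ b`. Conversely, `I * J` is
a quotient of `I ⊗ J`, and a functional `θ` on `M ⊗ N` yields the functionals `θ (m ⊗ ·)` on `N`,
so `tr (I * J) ≤ tr (I ⊗ J) ≤ tr J`.
-/

open nonZeroDivisors

open scoped TensorProduct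

section
variable {R : Type*} [CommRing R] {M N : Type*} [AddCommGroup M] [Module R M]
  [AddCommGroup N] [Module R N]

theorem mem_traceIdeal (φ : M →ₗ[R] R) (m : M) : φ m ∈ traceIdeal R M :=
  le_iSup (fun ψ : M →ₗ[R] R => LinearMap.range ψ) φ ⟨m, rfl⟩

theorem traceIdeal_le_iff {K : Ideal R} :
    traceIdeal R M ≤ K ↔ ∀ (φ : M →ₗ[R] R) (m : M), φ m ∈ K := by
  simp only [traceIdeal, iSup_le_iff, LinearMap.range_le_iff_comap, Submodule.eq_top_iff',
    Submodule.mem_comap]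

theorem traceIdeal_le_of_surjective {f : M →ₗ[R] N} (hf : Function.Surjective f) :
    traceIdeal R N ≤ traceIdeal R M :=
  traceIdeal_le_iff.2 fun φ n => by
    obtain ⟨m, rfl⟩ := hf n
    exact mem_traceIdeal (φ ∘ₗ f) m

theorem traceIdeal_tensorProduct_le_right : traceIdeal R (M ⊗[R] N) ≤ traceIdeal R N :=
  traceIdeal_le_iff.2 fun θ x => by
    induction x using TensorProduct.induction_on with
    | zero => simp
    | tmul m n => exact mem_traceIdeal (θ ∘ₗ TensorProduct.mk R M N m) n
    | add x y hx hy => simpa only [map_add] using add_mem hx hy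

theorem Ideal.traceIdeal_mul_le_right (I J : Ideal R) : traceIdeal R (I * J) ≤ traceIdeal R J :=
  (traceIdeal_le_of_surjective (Submodule.mulMap'_surjective I J)).trans
    traceIdeal_tensorProduct_le_right

theorem Ideal.traceIdeal_mul_le_left (I J : Ideal R) : traceIdeal R (I * J) ≤ traceIdeal R I := by
  rw [mul_comm]; exact Ideal.traceIdeal_mul_le_right J I

theorem LinearMap.apply_mul_right {I : Ideal R} (φ : I →ₗ[R] R) (a : I) (b : R) :
    φ ⟨a * b, I.mul_mem_right b a.2⟩ = b * φ a := by
  rw [← smul_eq_mul b, ← map_smul]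
  exact congrArg φ (Subtype.ext (mul_comm _ _))

theorem LinearMap.apply_mem_of_mem_mul {I J : Ideal R} (φ : I →ₗ[R] R) {x : R} (hx : x ∈ I * J) :
    φ ⟨x, Ideal.mul_le_left hx⟩ ∈ J := by
  induction hx using Submodule.mul_induction_on' with
  | mem_mul_mem a ha b hb =>
    exact φ.apply_mul_right ⟨a, ha⟩ b ▸ J.mul_mem_right _ hb
  | add x hx y hy ihx ihy =>
    exact (map_add φ ⟨x, _⟩ ⟨y, _⟩).symm ▸ add_mem ihx ihy

theorem Ideal.mul_mem_traceIdeal_mul {I J : Ideal R} (φ : I →ₗ[R] R) (ψ : J →ₗ[R] R)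
    (a : I) (b : J) : φ a * ψ b ∈ traceIdeal R (I * J) := by
  let φJ : ↥(I * J) →ₗ[R] J :=
    LinearMap.codRestrict J (φ ∘ₗ Submodule.inclusion Ideal.mul_le_left)
      fun x => φ.apply_mem_of_mem_mul x.2
  have hφJ : φJ ⟨a * b, Ideal.mul_mem_mul a.2 b.2⟩ = φ a • b := by
    ext
    exact (φ.apply_mul_right a b).trans (mul_comm _ _)
  have := mem_traceIdeal (ψ ∘ₗ φJ) ⟨a * b, Ideal.mul_mem_mul a.2 b.2⟩
  rwa [LinearMap.comp_apply, hφJ, map_smul, smul_eq_mul] at this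

theorem Ideal.traceIdeal_mul_traceIdeal_le (I J : Ideal R) :
    traceIdeal R I * traceIdeal R J ≤ traceIdeal R (I * J) := by
  simp only [traceIdeal, Ideal.iSup_mul, Ideal.mul_iSup, iSup_le_iff, Submodule.mul_le]
  rintro ψ φ _ ⟨a, rfl⟩ _ ⟨b, rfl⟩
  exact Ideal.mul_mem_traceIdeal_mul φ ψ a b

end

theorem trace_mul_ideals_general (R : Type*) [CommRing R] (I J : Ideal R) :
    traceIdeal R I * traceIdeal R J ≤ traceIdeal R (I * J) ∧
      traceIdeal R (I * J) ≤ traceIdeal R I ⊓ traceIdeal R J :=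
  ⟨Ideal.traceIdeal_mul_traceIdeal_le I J,
    le_inf (Ideal.traceIdeal_mul_le_left I J) (Ideal.traceIdeal_mul_le_right I J)⟩

/-- For ideals `I`, `J` of `R` each containing a nonzerodivisor,
`tr(I)·tr(J) ⊆ tr(I·J) ⊆ tr(I) ∩ tr(J)`. -/
theorem trace_mul_ideals (R : Type*) [CommRing R] (I J : Ideal R)
    (hI : ∃ x ∈ I, x ∈ R⁰) (hJ : ∃ x ∈ J, x ∈ R⁰) :
    traceIdeal R I * traceIdeal R J ≤ traceIdeal R (I * J) ∧
      traceIdeal R (I * J) ≤ traceIdeal R I ⊓ traceIdeal R J :=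
  trace_mul_ideals_general R I J
end

section
/- Let n > 2d ≥ 4 and let R_{n,d} be the d-th squarefree Veronese subalgebra of K[x₁,…,x_n]. For every sequence 1 ≤ i₁ < ⋯ < i_d ≤ n, the fraction 1/(x_{i₁}⋯x_{i_d}) belongs to the inverse of the canonical ideal ω_{R_{n,d}}: for every generator m = x₁^{a₁}⋯x_n^{a_n} of ω_{R_{n,d}} (i.e., a monomial with all a_i ≥ 1, d·a_i ≤ −1 + Σ_j a_j for all i, Σ_j a_j ≡ 0 mod d, and at most d−1 indices i with a_i ≥ 2), the product m/(x_{i₁}⋯x_{i_d}) is again a monomial in R_{n,d}. -/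
/-! Removing the squarefree monomial `x_s` lowers the total degree `T` by `d`, which keeps it
divisible by `d`. The inequality `d·(a_i - [i ∈ s]) ≤ T - d` follows from `d·a_i + d ≤ T`,
and that is the strict inequality `d·a_i < T` sharpened by `d ∣ T`. -/

theorem Nat.mul_succ_le_of_dvd_of_mul_lt {d x T : ℕ} (hdvd : d ∣ T) (hlt : d * x < T) :
    d * (x + 1) ≤ T := by
  obtain ⟨k, rfl⟩ := hdvd
  exact Nat.mul_le_mul_left d (Nat.lt_of_mul_lt_mul_left hlt)

theorem Finset.sum_tsub_indicator_eq {ι : Type*} [Fintype ι] [DecidableEq ι] (a : ι → ℕ)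
    (s : Finset ι) (hs : ∀ j ∈ s, 1 ≤ a j) :
    ∑ j, (a j - if j ∈ s then 1 else 0) = ∑ j, a j - s.card := by
  have hle : ∀ j ∈ Finset.univ, (if j ∈ s then 1 else 0) ≤ a j := by
    intro j _
    split_ifs with hj
    exacts [hs j hj, Nat.zero_le _]
  rw [Finset.sum_tsub_distrib _ hle, Finset.sum_boole, Finset.filter_mem_eq_inter,
    Finset.univ_inter, Nat.cast_id]

theorem inv_canonical_squarefree_veronese_general (n d : ℕ)
    (a : Fin n → ℕ)
    (h1 : ∀ i, 1 ≤ a i)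
    (h2 : ∀ i, d * a i + 1 ≤ ∑ j, a j)
    (h3 : d ∣ ∑ j, a j)
    (s : Finset (Fin n)) (hs : s.card = d) :
    (d ∣ ∑ j, (a j - if j ∈ s then 1 else 0)) ∧
      ∀ i, d * (a i - if i ∈ s then 1 else 0) ≤ ∑ j, (a j - if j ∈ s then 1 else 0) := by
  rw [Finset.sum_tsub_indicator_eq a s fun j _ => h1 j, hs]
  refine ⟨Nat.dvd_sub h3 dvd_rfl, fun i => ?_⟩
  have hgap : d * (a i + 1) ≤ ∑ j, a j := Nat.mul_succ_le_of_dvd_of_mul_lt h3 (h2 i)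
  have hdrop : d * (a i - if i ∈ s then 1 else 0) ≤ d * a i :=
    Nat.mul_le_mul_left d (Nat.sub_le _ _)
  rw [Nat.mul_succ] at hgap
  omega

/-- Let `n > 2d ≥ 4`. For every generator `m = x₁^{a₁}⋯x_n^{a_n}` of the
canonical ideal of the squarefree Veronese algebra `R_{n,d}` (i.e. `a_i ≥ 1`
and `d·a_i ≤ −1 + Σ a_j` for all `i`, `d ∣ Σ a_j`, and at most `d−1` indices
with `a_i ≥ 2`) and every choice of `d` distinct indices `i₁ < ⋯ < i_d`, the
quotient `m/(x_{i₁}⋯x_{i_d})` is again a monomial in `R_{n,d}`, i.e. its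
exponent vector satisfies the membership conditions for `R_{n,d}`. -/
theorem inv_canonical_squarefree_veronese (n d : ℕ) (hd : 2 ≤ d) (hnd : 2 * d < n)
    (a : Fin n → ℕ)
    (h1 : ∀ i, 1 ≤ a i)
    (h2 : ∀ i, d * a i + 1 ≤ ∑ j, a j)
    (h3 : d ∣ ∑ j, a j)
    (h4 : (Finset.univ.filter fun i => 2 ≤ a i).card ≤ d - 1)
    (s : Finset (Fin n)) (hs : s.card = d) :
    (d ∣ ∑ j, (a j - if j ∈ s then 1 else 0)) ∧
      ∀ i, d * (a i - if i ∈ s then 1 else 0) ≤ ∑ j, (a j - if j ∈ s then 1 else 0) :=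
  inv_canonical_squarefree_veronese_general n d a h1 h2 h3 s hs
end

section
/- A monomial x₁^{a₁}⋯x_n^{a_n} lies in the d-th squarefree Veronese subalgebra R_{n,d} of K[x₁,…,x_n] if and only if Σ_{i=1}^n a_i ≡ 0 mod d and d·a_i ≤ Σ_{j=1}^n a_j for all i = 1,…,n. -/
/-!
A sum of generators `v₁ + ⋯ + v_m` has total degree `d * m` and each coordinate at most `m`,
which gives the two conditions. Conversely, if `∑ a = d * (m + 1)` and `a ≤ m + 1`, counting
shows that at most `d` coordinates equal `m + 1` while at least `d` are nonzero; a `d`-subset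
squeezed between these two sets is the support of a generator `v ≤ a`, and `a - v` satisfies the
same conditions with `m` in place of `m + 1`, so induction on `m` finishes.
-/

open Finset

/-- Exponent vectors of the monomials of degree `m` in the squarefree Veronese algebra: total
degree `d * m`, with no variable occurring more than `m` times. -/
def squarefreeVeroneseExponents (ι : Type*) [Fintype ι] (d : ℕ) : AddSubmonoid (ι → ℕ) where
  carrier := {a | ∃ m, ∑ i, a i = d * m ∧ ∀ i, a i ≤ m}
  zero_mem' := ⟨0, by simp, fun _ => le_rfl⟩
  add_mem' := by
    rintro a b ⟨m, ha, ha_le⟩ ⟨k, hb, hb_le⟩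
    exact ⟨m + k, by simp only [Pi.add_apply, sum_add_distrib, ha, hb, mul_add],
      fun i => add_le_add (ha_le i) (hb_le i)⟩

variable {ι : Type*} [Fintype ι]

lemma exists_card_eq_of_sum_eq_mul_succ [DecidableEq ι] {d m : ℕ} {a : ι → ℕ}
    (hsum : ∑ i, a i = d * (m + 1)) (hle : ∀ i, a i ≤ m + 1) :
    ∃ s : Finset ι, ({i | a i = m + 1} : Finset ι) ⊆ s ∧ s ⊆ ({i | a i ≠ 0} : Finset ι) ∧
      s.card = d := by
  refine exists_subsuperset_card_eq (fun i hi => ?_) ?_ ?_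
  · simp only [mem_filter, mem_univ, true_and] at hi ⊢
    omega
  · refine Nat.le_of_mul_le_mul_right ?_ m.succ_pos
    calc #{i | a i = m + 1} * (m + 1) = ∑ i ∈ {i | a i = m + 1}, a i := by
          rw [sum_congr rfl fun i hi => (mem_filter.mp hi).2, sum_const, smul_eq_mul]
      _ ≤ ∑ i, a i := sum_le_sum_of_subset (subset_univ _)
      _ = d * (m + 1) := hsum
  · refine Nat.le_of_mul_le_mul_right ?_ m.succ_pos
    calc d * (m + 1) = ∑ i ∈ {i | a i ≠ 0}, a i := by rw [sum_filter_ne_zero, hsum]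
      _ ≤ #{i | a i ≠ 0} * (m + 1) := sum_le_card_nsmul _ _ _ fun i _ => hle i

lemma mem_closure_of_sum_eq_mul {d : ℕ} (m : ℕ) {a : ι → ℕ} (hsum : ∑ i, a i = d * m)
    (hle : ∀ i, a i ≤ m) :
    a ∈ AddSubmonoid.closure {v : ι → ℕ | (∀ i, v i ≤ 1) ∧ ∑ i, v i = d} := by
  classical
  induction m generalizing a with
  | zero =>
    have : a = 0 := funext fun i => Nat.le_zero.mp (hle i)
    exact this ▸ AddSubmonoid.zero_mem _
  | succ m ih =>
    obtain ⟨s, hmax, hsupp, hcard⟩ := exists_card_eq_of_sum_eq_mul_succ hsum hle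
    set v : ι → ℕ := fun i => if i ∈ s then 1 else 0
    have hv_le : ∀ i, v i ≤ a i := fun i => by
      by_cases hi : i ∈ s
      · simpa [v, hi, Nat.one_le_iff_ne_zero] using hsupp hi
      · simp [v, hi]
    have hv_sum : ∑ i, v i = d := by simp [v, hcard]
    have hsplit : a = (a - v) + v := (tsub_add_cancel_of_le hv_le).symm
    have hrest_sum : ∑ i, (a - v) i = d * m := by
      have := congrArg (fun b : ι → ℕ => ∑ i, b i) hsplit
      simp only [Pi.add_apply, sum_add_distrib, hv_sum, hsum, mul_add, mul_one] at this
      omega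
    have hrest_le : ∀ i, (a - v) i ≤ m := fun i => by
      have := hle i
      by_cases hi : i ∈ s
      · simp only [Pi.sub_apply, v, hi, if_true]
        omega
      · have : a i ≠ m + 1 := fun h => hi (hmax (by simpa using h))
        simp only [Pi.sub_apply, v, hi, if_false]
        omega
    have hv_gen : ∀ i, v i ≤ 1 := fun i => by by_cases hi : i ∈ s <;> simp [v, hi]
    rw [hsplit]
    exact AddSubmonoid.add_mem _ (ih hrest_sum hrest_le)
      (AddSubmonoid.subset_closure ⟨hv_gen, hv_sum⟩)

lemma closure_squarefree_eq (d : ℕ) :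
    AddSubmonoid.closure {v : ι → ℕ | (∀ i, v i ≤ 1) ∧ ∑ i, v i = d} =
      squarefreeVeroneseExponents ι d := by
  refine le_antisymm (AddSubmonoid.closure_le.mpr ?_) ?_
  · rintro v ⟨hv_le, hv_sum⟩
    exact ⟨1, by rw [hv_sum, mul_one], hv_le⟩
  · rintro a ⟨m, hsum, hle⟩
    exact mem_closure_of_sum_eq_mul m hsum hle

theorem mem_squarefree_veronese_iff_general (n d : ℕ) (hd : 1 ≤ d)
    (a : Fin n → ℕ) :
    a ∈ AddSubmonoid.closure {v : Fin n → ℕ | (∀ i, v i ≤ 1) ∧ ∑ i, v i = d} ↔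
      (d ∣ ∑ i, a i ∧ ∀ i, d * a i ≤ ∑ j, a j) := by
  rw [closure_squarefree_eq]
  constructor
  · rintro ⟨m, hsum, hle⟩
    exact ⟨⟨m, hsum⟩, fun i => hsum ▸ Nat.mul_le_mul_left d (hle i)⟩
  · rintro ⟨⟨m, hsum⟩, hle⟩
    exact ⟨m, hsum, fun i => Nat.le_of_mul_le_mul_left (hsum ▸ hle i) hd⟩

/-- A monomial `x₁^{a₁}⋯x_n^{a_n}` lies in the `d`-th squarefree Veronese
subalgebra `R_{n,d}` of `K[x₁,…,x_n]` iff `d ∣ Σ a_i` and `d·a_i ≤ Σ a_j` for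
all `i`. In terms of exponent vectors: `a ∈ ℕⁿ` lies in the additive submonoid
generated by the 0-1 vectors with exactly `d` ones iff these two conditions
hold. -/
theorem mem_squarefree_veronese_iff (n d : ℕ) (hd : 1 ≤ d) (hdn : d ≤ n)
    (a : Fin n → ℕ) :
    a ∈ AddSubmonoid.closure {v : Fin n → ℕ | (∀ i, v i ≤ 1) ∧ ∑ i, v i = d} ↔
      (d ∣ ∑ i, a i ∧ ∀ i, d * a i ≤ ∑ j, a j) :=
  mem_squarefree_veronese_iff_general n d hd a
end

section
/- Let H = ⟨n₁,…,n_e⟩ be a numerical semigroup of minimal multiplicity, i.e., with n₁ < n₂ < ⋯ < n_e, gcd = 1, and n₁ = e. Then the set of pseudo-Frobenius numbers of H is PF(H) = {n₂ − n₁, …, n_e − n₁}. In particular the Frobenius number of H is n_e − n₁. -/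
/-!
Let `m = n₁`. If a generator `g ≠ m` satisfied `g ≡ x (mod m)` for some `x ≤ g` in the semigroup
spanned by the other generators, then `g = x + t m` would contradict minimality. Applied to
`x = 0`, to `x` another generator and to `x` a sum of two generators, this shows that the
`e - 1 = m - 1` generators other than `m` lie in distinct nonzero residue classes modulo `m`, hence
represent each nonzero class exactly once, and that `g + m ≤ g₁ + g₂` whenever
`g ≡ g₁ + g₂ (mod m)`. Consequently `x ∈ H` iff `x` is at least the generator in its residue
class (the Apéry set of `m` is `{0, n₂, …, n_e}`), and `PF(H)` and `Fr(H)` are read off from this.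
-/

/-- The set of pseudo-Frobenius numbers of `H`: the `f ∉ H` with `f + h ∈ H`
for every nonzero `h ∈ H`. -/
def PF (H : AddSubmonoid ℕ) : Set ℕ := {f | f ∉ H ∧ ∀ h ∈ H, h ≠ 0 → f + h ∈ H}

theorem AddSubmonoid.mul_mem_of_left {S : AddSubmonoid ℕ} {m : ℕ} (hm : m ∈ S) (t : ℕ) :
    m * t ∈ S :=
  mul_comm t m ▸ S.nsmul_mem hm t

theorem mem_PF_closure_iff {t : Set ℕ} {f : ℕ} :
    f ∈ PF (AddSubmonoid.closure t) ↔
      f ∉ AddSubmonoid.closure t ∧ ∀ g ∈ t, g ≠ 0 → f + g ∈ AddSubmonoid.closure t := by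
  refine ⟨fun hf => ⟨hf.1, fun g hg => hf.2 g (AddSubmonoid.subset_closure hg)⟩,
    fun ⟨hf, hgen⟩ => ⟨hf, ?_⟩⟩
  suffices ∀ h ∈ AddSubmonoid.closure t, h = 0 ∨ f + h ∈ AddSubmonoid.closure t from
    fun h hh hh0 => (this h hh).resolve_left hh0
  intro h hh
  induction hh using AddSubmonoid.closure_induction with
  | mem g hg => exact (eq_or_ne g 0).imp id (hgen g hg)
  | zero => exact Or.inl rfl
  | add x y _ hy ihx ihy =>
    rcases ihx with rfl | hfx
    · simpa using ihy
    · exact Or.inr (add_assoc f x y ▸ add_mem hfx hy)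

def IsMinimalGeneratingSet (s : Finset ℕ) : Prop :=
  ∀ g ∈ s, g ∉ AddSubmonoid.closure ((s : Set ℕ) \ {g})

namespace IsMinimalGeneratingSet

variable {s : Finset ℕ} {m g : ℕ}

theorem ne_zero_of_mem (hs : IsMinimalGeneratingSet s) (hm : m ∈ s) : m ≠ 0 := by
  rintro rfl
  exact hs 0 hm (zero_mem _)

theorem lt_of_mem_closure_sdiff_of_modEq (hs : IsMinimalGeneratingSet s) (hm : m ∈ s)
    (hg : g ∈ s) (hgm : g ≠ m) {x : ℕ} (hx : x ∈ AddSubmonoid.closure ((s : Set ℕ) \ {g}))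
    (hxg : x ≡ g [MOD m]) : g < x := by
  by_contra! hgx
  obtain ⟨t, rfl⟩ := (Nat.modEq_iff_exists_eq_add hgx).1 hxg
  have hm' : m ∈ (s : Set ℕ) \ {x + m * t} := ⟨hm, hgm.symm⟩
  exact hs _ hg (add_mem hx (AddSubmonoid.mul_mem_of_left (AddSubmonoid.subset_closure hm') t))

theorem not_dvd (hs : IsMinimalGeneratingSet s) (hm : m ∈ s) (hg : g ∈ s) (hgm : g ≠ m) :
    ¬ m ∣ g := fun hdvd =>
  Nat.not_lt_zero g <| hs.lt_of_mem_closure_sdiff_of_modEq hm hg hgm (zero_mem _)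
    (Nat.modEq_zero_iff_dvd.2 hdvd).symm

theorem eq_of_modEq (hs : IsMinimalGeneratingSet s) (hm : m ∈ s) {g' : ℕ} (hg : g ∈ s)
    (hg' : g' ∈ s) (hgm : g ≠ m) (hg'm : g' ≠ m) (h : g ≡ g' [MOD m]) : g = g' := by
  by_contra hne
  have := hs.lt_of_mem_closure_sdiff_of_modEq hm hg hgm
    (AddSubmonoid.subset_closure ⟨hg', Ne.symm hne⟩) h.symm
  have := hs.lt_of_mem_closure_sdiff_of_modEq hm hg' hg'm
    (AddSubmonoid.subset_closure ⟨hg, hne⟩) h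
  omega

theorem add_le_of_modEq_add (hs : IsMinimalGeneratingSet s) (hm : m ∈ s) {g₁ g₂ : ℕ}
    (hg₁ : g₁ ∈ s) (hg₂ : g₂ ∈ s) (hg : g ∈ s) (hg₁m : g₁ ≠ m) (hg₂m : g₂ ≠ m) (hgm : g ≠ m)
    (h : g ≡ g₁ + g₂ [MOD m]) : g + m ≤ g₁ + g₂ := by
  have hg₁g : g₁ ≠ g := by
    rintro rfl
    exact hs.not_dvd hm hg₂ hg₂m (Nat.add_modEq_left_iff.1 h.symm)
  have hg₂g : g₂ ≠ g := by
    rintro rfl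
    exact hs.not_dvd hm hg₁ hg₁m (Nat.add_modEq_right_iff.1 h.symm)
  have hsum : g₁ + g₂ ∈ AddSubmonoid.closure ((s : Set ℕ) \ {g}) :=
    add_mem (AddSubmonoid.subset_closure ⟨hg₁, hg₁g⟩) (AddSubmonoid.subset_closure ⟨hg₂, hg₂g⟩)
  exact h.add_le_of_lt (hs.lt_of_mem_closure_sdiff_of_modEq hm hg hgm hsum h.symm)

theorem mapsTo_mod_erase (hs : IsMinimalGeneratingSet s) (hm : m ∈ s) :
    Set.MapsTo (· % m) (s.erase m : Set ℕ) (Finset.Ioo 0 m : Set ℕ) := by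
  intro g hg
  obtain ⟨hgm, hg⟩ := Finset.mem_erase.1 hg
  exact Finset.mem_Ioo.2 ⟨Nat.pos_of_ne_zero fun h0 =>
      hs.not_dvd hm hg hgm (Nat.dvd_of_mod_eq_zero h0),
    Nat.mod_lt _ (Nat.pos_of_ne_zero (hs.ne_zero_of_mem hm))⟩

theorem injOn_mod_erase (hs : IsMinimalGeneratingSet s) (hm : m ∈ s) :
    Set.InjOn (· % m) (s.erase m : Set ℕ) := fun _ ha _ hb h =>
  hs.eq_of_modEq hm (Finset.mem_of_mem_erase ha) (Finset.mem_of_mem_erase hb)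
    (Finset.ne_of_mem_erase ha) (Finset.ne_of_mem_erase hb) h

theorem card_le_of_mem (hs : IsMinimalGeneratingSet s) (hm : m ∈ s) : s.card ≤ m := by
  have := Finset.card_le_card_of_injOn _ (hs.mapsTo_mod_erase hm) (hs.injOn_mod_erase hm)
  rw [Finset.card_erase_of_mem hm, Nat.card_Ioo] at this
  have := hs.ne_zero_of_mem hm
  omega

theorem exists_modEq_of_card_eq (hs : IsMinimalGeneratingSet s) (hm : m ∈ s)
    (hcard : s.card = m) {x : ℕ} (hx : ¬ m ∣ x) : ∃ g ∈ s, g ≠ m ∧ g ≡ x [MOD m] := by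
  have hsurj := Finset.surjOn_of_injOn_of_card_le _ (hs.mapsTo_mod_erase hm)
    (hs.injOn_mod_erase hm) (by rw [Finset.card_erase_of_mem hm, Nat.card_Ioo]; omega)
  have hxm : x % m ∈ Finset.Ioo 0 m := Finset.mem_Ioo.2
    ⟨Nat.pos_of_ne_zero (mt Nat.dvd_of_mod_eq_zero hx),
      Nat.mod_lt _ (Nat.pos_of_ne_zero (hs.ne_zero_of_mem hm))⟩
  obtain ⟨g, hg, hgx⟩ := hsurj hxm
  obtain ⟨hgm, hg⟩ := Finset.mem_erase.1 hg
  exact ⟨g, hg, hgm, hgx⟩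

theorem le_of_mem_closure_of_modEq (hs : IsMinimalGeneratingSet s) (hm : m ∈ s)
    (hcard : s.card = m) {x : ℕ} (hx : x ∈ AddSubmonoid.closure (s : Set ℕ)) :
    ∀ g ∈ s, g ≠ m → x ≡ g [MOD m] → g ≤ x := by
  induction hx using AddSubmonoid.closure_induction with
  | mem y hy =>
    intro g hg hgm hyg
    obtain rfl | hym := eq_or_ne y m
    · exact absurd (Nat.modEq_zero_iff_dvd.1 (hyg.symm.trans (Nat.modEq_zero_iff_dvd.2 dvd_rfl)))
        (hs.not_dvd hy hg hgm)
    · exact (hs.eq_of_modEq hm hy hg hym hgm hyg).ge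
  | zero =>
    intro g hg hgm h0g
    exact absurd (Nat.modEq_zero_iff_dvd.1 h0g.symm) (hs.not_dvd hm hg hgm)
  | add x y _ _ ihx ihy =>
    intro g hg hgm hxyg
    by_cases hx : m ∣ x
    · have := ihy g hg hgm ((Nat.add_modEq_right_iff.2 hx).symm.trans hxyg)
      omega
    by_cases hy : m ∣ y
    · have := ihx g hg hgm ((Nat.add_modEq_left_iff.2 hy).symm.trans hxyg)
      omega
    obtain ⟨g₁, hg₁, hg₁m, hg₁x⟩ := hs.exists_modEq_of_card_eq hm hcard hx
    obtain ⟨g₂, hg₂, hg₂m, hg₂y⟩ := hs.exists_modEq_of_card_eq hm hcard hy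
    have := hs.add_le_of_modEq_add hm hg₁ hg₂ hg hg₁m hg₂m hgm
      (hxyg.symm.trans (hg₁x.add hg₂y).symm)
    have := ihx g₁ hg₁ hg₁m hg₁x.symm
    have := ihy g₂ hg₂ hg₂m hg₂y.symm
    omega

theorem mem_closure_of_forall_modEq_le (hs : IsMinimalGeneratingSet s) (hm : m ∈ s)
    (hcard : s.card = m) {x : ℕ} (hx : ∀ g ∈ s, g ≠ m → x ≡ g [MOD m] → g ≤ x) :
    x ∈ AddSubmonoid.closure (s : Set ℕ) := by
  have hmS : m ∈ AddSubmonoid.closure (s : Set ℕ) := AddSubmonoid.subset_closure hm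
  by_cases hdvd : m ∣ x
  · obtain ⟨t, rfl⟩ := hdvd
    exact AddSubmonoid.mul_mem_of_left hmS t
  · obtain ⟨g, hg, hgm, hgx⟩ := hs.exists_modEq_of_card_eq hm hcard hdvd
    obtain ⟨t, rfl⟩ := (Nat.modEq_iff_exists_eq_add (hx g hg hgm hgx.symm)).1 hgx
    exact add_mem (AddSubmonoid.subset_closure hg) (AddSubmonoid.mul_mem_of_left hmS t)

theorem mem_closure_iff_forall_modEq_le (hs : IsMinimalGeneratingSet s) (hm : m ∈ s)
    (hcard : s.card = m) {x : ℕ} :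
    x ∈ AddSubmonoid.closure (s : Set ℕ) ↔ ∀ g ∈ s, g ≠ m → x ≡ g [MOD m] → g ≤ x :=
  ⟨hs.le_of_mem_closure_of_modEq hm hcard, hs.mem_closure_of_forall_modEq_le hm hcard⟩

theorem exists_add_le_of_notMem_closure (hs : IsMinimalGeneratingSet s) (hm : m ∈ s)
    (hcard : s.card = m) {x : ℕ} (hx : x ∉ AddSubmonoid.closure (s : Set ℕ)) :
    ∃ g ∈ s, g ≠ m ∧ x ≡ g [MOD m] ∧ x + m ≤ g := by
  rw [hs.mem_closure_iff_forall_modEq_le hm hcard] at hx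
  push Not at hx
  obtain ⟨g, hg, hgm, hxg, hlt⟩ := hx
  exact ⟨g, hg, hgm, hxg, hxg.add_le_of_lt hlt⟩

theorem sub_notMem_closure (hs : IsMinimalGeneratingSet s) (hm : m ∈ s) (hcard : s.card = m)
    (hg : g ∈ s) (hgm : g ≠ m) : g - m ∉ AddSubmonoid.closure (s : Set ℕ) := by
  have hmg : m ≤ g := hcard ▸ hs.card_le_of_mem hg
  have hm0 := hs.ne_zero_of_mem hm
  rw [hs.mem_closure_iff_forall_modEq_le hm hcard]
  intro h
  have := h g hg hgm ((Nat.modEq_sub_modulus_iff hmg).1 rfl)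
  omega

theorem PF_closure_eq (hs : IsMinimalGeneratingSet s) (hm : m ∈ s) (hcard : s.card = m) :
    PF (AddSubmonoid.closure (s : Set ℕ)) = {x | ∃ g ∈ s, g ≠ m ∧ x = g - m} := by
  ext f
  constructor
  · rintro ⟨hf, hadd⟩
    obtain ⟨g, hg, hgm, hfg, hle⟩ := hs.exists_add_le_of_notMem_closure hm hcard hf
    have := (hs.mem_closure_iff_forall_modEq_le hm hcard).1
      (hadd m (AddSubmonoid.subset_closure hm) (hs.ne_zero_of_mem hm)) g hg hgm
      (Nat.add_modEq_right.trans hfg)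
    exact ⟨g, hg, hgm, by omega⟩
  · rintro ⟨g, hg, hgm, rfl⟩
    have hmg : m ≤ g := hcard ▸ hs.card_le_of_mem hg
    refine mem_PF_closure_iff.2 ⟨hs.sub_notMem_closure hm hcard hg hgm, fun g' hg' _ => ?_⟩
    obtain rfl | hg'm := eq_or_ne g' m
    · rw [Nat.sub_add_cancel hmg]
      exact AddSubmonoid.subset_closure hg
    · refine (hs.mem_closure_iff_forall_modEq_le hm hcard).2 fun g'' hg'' hg''m h => ?_
      have := hs.add_le_of_modEq_add hm hg hg' hg'' hgm hg'm hg''m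
        (h.symm.trans (((Nat.modEq_sub_modulus_iff hmg).1 rfl).add_right g'))
      omega

theorem isGreatest_notMem_closure (hs : IsMinimalGeneratingSet s) (hm : m ∈ s)
    (hcard : s.card = m) (hg : g ∈ s) (hgm : g ≠ m) (hmax : ∀ g' ∈ s, g' ≤ g) :
    IsGreatest {x | x ∉ AddSubmonoid.closure (s : Set ℕ)} (g - m) := by
  refine ⟨hs.sub_notMem_closure hm hcard hg hgm, fun x hx => ?_⟩
  obtain ⟨g', hg', -, -, hle⟩ := hs.exists_add_le_of_notMem_closure hm hcard hx
  have := hmax g' hg'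
  omega

end IsMinimalGeneratingSet

/-- If `H = ⟨n₁,…,n_e⟩` is a numerical semigroup of minimal multiplicity
(`n₁ = e`), then `PF(H) = {n₂ − n₁, …, n_e − n₁}`; in particular the Frobenius
number of `H` is `n_e − n₁`. -/
theorem pf_of_minimal_multiplicity (e : ℕ) (he : 1 < e) (n : Fin e → ℕ)
    (hmono : StrictMono n) (H : AddSubmonoid ℕ)
    (hgen : H = AddSubmonoid.closure (Set.range n))
    (hmin : ∀ i, n i ∉ AddSubmonoid.closure (Set.range n \ {n i}))
    (hmm : n ⟨0, by omega⟩ = e) :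
    PF H = {x : ℕ | ∃ i : Fin e, (i : ℕ) ≠ 0 ∧ x = n i - n ⟨0, by omega⟩} ∧
      IsGreatest {x : ℕ | x ∉ H} (n ⟨e - 1, by omega⟩ - n ⟨0, by omega⟩) := by
  set s := Finset.univ.image n
  have hs_coe : (s : Set ℕ) = Set.range n := by simp [s]
  have hmem (i : Fin e) : n i ∈ s := Finset.mem_image_of_mem n (Finset.mem_univ i)
  have hs : IsMinimalGeneratingSet s := by
    simpa only [IsMinimalGeneratingSet, hs_coe, s, Finset.forall_mem_image, Finset.mem_univ,
      true_implies] using hmin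
  have hcard : s.card = n ⟨0, by omega⟩ := by
    rw [Finset.card_image_of_injective _ hmono.injective, Finset.card_univ, Fintype.card_fin, hmm]
  have hne (i : Fin e) : n i ≠ n ⟨0, by omega⟩ ↔ (i : ℕ) ≠ 0 := by
    rw [hmono.injective.ne_iff, Ne, Fin.ext_iff]
  have hmax : ∀ g ∈ s, g ≤ n ⟨e - 1, by omega⟩ := by
    simpa [s] using fun i => hmono.monotone (Fin.le_iff_val_le_val.2 (Nat.le_sub_one_of_lt i.isLt))
  subst hgen
  rw [← hs_coe, hs.PF_closure_eq (hmem _) hcard]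
  refine ⟨?_, hs.isGreatest_notMem_closure (hmem _) hcard (hmem _)
    ((hne _).2 (show e - 1 ≠ 0 by omega)) hmax⟩
  ext x
  simp only [s, Finset.mem_image, Finset.mem_univ, true_and]
  constructor
  · rintro ⟨_, ⟨i, rfl⟩, hi, rfl⟩
    exact ⟨i, (hne i).1 hi, rfl⟩
  · rintro ⟨i, hi, rfl⟩
    exact ⟨n i, ⟨i, rfl⟩, (hne i).2 hi, rfl⟩
end

section
/- Let e > 2 and H = ⟨a, a+d, a+2d, …, a+(e−1)d⟩ with a, d coprime positive integers and e ≤ a. Then H is symmetric if and only if a ≡ 2 (mod e−1). -/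
/-- The set of integers belonging to the numerical semigroup `H ⊆ ℕ`. -/
def HZ (H : AddSubmonoid ℕ) : Set ℤ := {z : ℤ | ∃ h ∈ H, (h : ℤ) = z}

/-- The canonical relative ideal `Ω_H = {x ∈ ℤ : F − x ∉ H}`, where `F` is the
Frobenius number of `H`. -/
def Omega (H : AddSubmonoid ℕ) (F : ℕ) : Set ℤ := {x : ℤ | (F : ℤ) - x ∉ HZ H}

/-- The anti-canonical relative ideal `Ω_H⁻¹ = {z ∈ ℤ : z + Ω_H ⊆ H}`. -/
def OmegaInv (H : AddSubmonoid ℕ) (F : ℕ) : Set ℤ :=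
  {z : ℤ | ∀ w ∈ Omega H F, z + w ∈ HZ H}


/-!
Put `m = e - 1`. Since `a` and `d` are coprime, every integer is uniquely `k a + r d` with
`0 ≤ r < a`, and it lies in `H` iff `r ≤ k m`. Hence the Frobenius number is
`F = q a + (a - 1) d` with `q = ⌊(a - 2) / m⌋`, and `F - (k a + r d) = (q - k) a + (a - 1 - r) d`
lies in `H` iff `a - 1 - r ≤ (q - k) m`. When `m ∣ a - 2` we have `q m = a - 2`, and this is
exactly the negation of `r ≤ k m`; otherwise both `d` and `F - d` are gaps.
-/

-- The paper's `e` is `m + 1`: the generators are `a, a + d, …, a + m d`.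
def arithSemigroup (a d m : ℕ) : AddSubmonoid ℕ :=
  AddSubmonoid.closure (Set.range fun i : Fin (m + 1) => a + (i : ℕ) * d)

lemma natCast_mem_HZ_iff {H : AddSubmonoid ℕ} {n : ℕ} : (n : ℤ) ∈ HZ H ↔ n ∈ H := by
  simp [HZ]

section ArithSemigroup

variable {a d m : ℕ}

lemma mem_arithSemigroup_iff {n : ℕ} :
    n ∈ arithSemigroup a d m ↔ ∃ k t : ℕ, t ≤ k * m ∧ n = k * a + t * d := by
  constructor
  · intro hn
    induction hn using AddSubmonoid.closure_induction with
    | mem x hx =>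
      obtain ⟨i, rfl⟩ := hx
      exact ⟨1, i, by have := i.isLt; omega, by ring⟩
    | zero => exact ⟨0, 0, by simp, by simp⟩
    | add x y _ _ hx hy =>
      obtain ⟨k, t, ht, rfl⟩ := hx
      obtain ⟨k', t', ht', rfl⟩ := hy
      exact ⟨k + k', t + t', by rw [add_mul]; omega, by ring⟩
  · rintro ⟨k, t, ht, rfl⟩
    induction k generalizing t with
    | zero => simp_all
    | succ k ih =>
      -- Peel off one generator `a + s d` with `s = min t m`.
      have hgen : a + min t m * d ∈ arithSemigroup a d m :=
        AddSubmonoid.subset_closure ⟨⟨min t m, by omega⟩, rfl⟩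
      have hrest := ih (t - min t m) (by rw [add_mul] at ht; omega)
      convert add_mem hgen hrest using 1
      zify [min_le_left t m]
      ring

lemma exists_eq_mul_add_mul (ha : 0 < a) (hcop : Nat.Coprime a d) (x : ℤ) :
    ∃ (k : ℤ) (r : ℕ), r < a ∧ x = k * a + r * d := by
  obtain ⟨u, v, huv⟩ := Nat.isCoprime_iff_coprime.mpr hcop
  have hdiv := Int.mul_ediv_add_emod (x * v) a
  have hr0 : 0 ≤ x * v % a := Int.emod_nonneg _ (by omega)
  have hra : x * v % a < a := Int.emod_lt_of_pos _ (by omega)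
  refine ⟨x * u + x * v / a * d, (x * v % a).toNat, by omega, ?_⟩
  rw [Int.toNat_of_nonneg hr0]
  linear_combination (-x) * huv - (d : ℤ) * hdiv

lemma eq_of_mul_add_mul_eq (hcop : Nat.Coprime a d) {k k' : ℤ} {r r' : ℕ}
    (hr : r < a) (hr' : r' < a) (h : k * a + r * d = k' * a + r' * d) : k = k' ∧ r = r' := by
  have hdvd : (a : ℤ) ∣ ((r' : ℤ) - r) * d := ⟨k - k', by linear_combination -h⟩
  have hrr : (r' : ℤ) - r = 0 :=
    Int.eq_zero_of_abs_lt_dvd ((Nat.isCoprime_iff_coprime.mpr hcop).dvd_of_dvd_mul_right hdvd)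
      (by rw [abs_lt]; omega)
  have hkk : k * a = k' * a := by linear_combination h + (d : ℤ) * hrr
  exact ⟨mul_right_cancel₀ (by omega) hkk, by omega⟩

lemma mul_add_mul_mem_HZ_iff (hm : 0 < m) (hcop : Nat.Coprime a d) {k : ℤ} {r : ℕ}
    (hr : r < a) : k * a + r * d ∈ HZ (arithSemigroup a d m) ↔ (r : ℤ) ≤ k * m := by
  constructor
  · rintro ⟨n, hn, hnx⟩
    obtain ⟨K, T, hT, rfl⟩ := mem_arithSemigroup_iff.mp hn
    have hTa := Nat.div_add_mod T a
    obtain ⟨hk, hr⟩ := eq_of_mul_add_mul_eq hcop (Nat.mod_lt T (by omega)) hr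
      (show ((K + T / a * d : ℕ) : ℤ) * a + (T % a : ℕ) * d = k * a + r * d by
        rw [← hnx]; push_cast; zify at hTa; linear_combination (d : ℤ) * hTa)
    subst hk hr
    exact_mod_cast (Nat.mod_le T a).trans
      (hT.trans (Nat.mul_le_mul_right m (Nat.le_add_right _ _)))
  · intro h
    have hk : 0 ≤ k := by by_contra! hk; nlinarith
    lift k to ℕ using hk
    exact ⟨k * a + r * d, mem_arithSemigroup_iff.mpr ⟨k, r, by exact_mod_cast h, rfl⟩,
      by push_cast; ring⟩

lemma isGreatest_notMem_arithSemigroup (hm : 0 < m) (hcop : Nat.Coprime a d) (ha : 2 ≤ a) :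
    IsGreatest {n | n ∉ arithSemigroup a d m} ((a - 2) / m * a + (a - 1) * d) := by
  have hq : (a - 2) / m * m ≤ a - 2 := Nat.div_mul_le_self _ _
  constructor
  · intro hF_mem
    have hmem := (mul_add_mul_mem_HZ_iff hm hcop (k := ((a - 2) / m : ℕ)) (r := a - 1)
      (by omega)).mp (by exact_mod_cast natCast_mem_HZ_iff.mpr hF_mem)
    have : a - 1 ≤ (a - 2) / m * m := by exact_mod_cast hmem
    omega
  · intro n hn
    obtain ⟨k, r, hr, hn_eq⟩ := exists_eq_mul_add_mul (by omega) hcop n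
    have hgap : k * m < r := by
      rw [← not_le, ← mul_add_mul_mem_HZ_iff hm hcop hr, ← hn_eq, natCast_mem_HZ_iff]
      exact hn
    have hk : k ≤ ((a - 2) / m : ℕ) := by
      rw [Int.natCast_div, Int.le_ediv_iff_mul_le (by omega)]
      omega
    have : (n : ℤ) ≤ ((a - 2) / m : ℕ) * a + (a - 1 : ℕ) * d := by
      rw [hn_eq]
      gcongr
      omega
    exact_mod_cast this

lemma frobenius_sub_mem_HZ_iff (hm : 0 < m) (hcop : Nat.Coprime a d) {k : ℤ} {r : ℕ}
    (hr : r < a) :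
    (((a - 2) / m * a + (a - 1) * d : ℕ) : ℤ) - (k * a + r * d) ∈ HZ (arithSemigroup a d m) ↔
      (a : ℤ) - 1 - r + k * m ≤ ((a - 2) / m * m : ℕ) := by
  have hF : (((a - 2) / m * a + (a - 1) * d : ℕ) : ℤ) - (k * a + r * d) =
      (((a - 2) / m : ℕ) - k) * a + (a - 1 - r : ℕ) * d := by
    push_cast [Nat.cast_sub (show 1 ≤ a by omega), Nat.cast_sub (show r ≤ a - 1 by omega)]
    ring
  have hr' : ((a - 1 - r : ℕ) : ℤ) = a - 1 - r := by omega
  rw [hF, mul_add_mul_mem_HZ_iff hm hcop (by omega), hr', Nat.cast_mul]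
  constructor <;> intro h <;> linarith

end ArithSemigroup

theorem arithmetic_symmetric_iff_general (e a d : ℕ) (he : 2 < e) (hcop : Nat.Coprime a d) (hea : e ≤ a)
    (H : AddSubmonoid ℕ)
    (hH : H = AddSubmonoid.closure (Set.range fun i : Fin e => a + (i : ℕ) * d))
    (F : ℕ) (hF : IsGreatest {x : ℕ | x ∉ H} F) :
    (∀ x : ℤ, x ∈ HZ H ∨ (F : ℤ) - x ∈ HZ H) ↔ a % (e - 1) = 2 % (e - 1) := by
  obtain ⟨m, rfl⟩ : ∃ m, e = m + 1 := ⟨e - 1, by omega⟩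
  have hm : 0 < m := by omega
  have ha : 2 ≤ a := by omega
  change H = arithSemigroup a d m at hH
  subst hH
  obtain rfl := hF.unique (isGreatest_notMem_arithSemigroup hm hcop ha)
  rw [Nat.add_sub_cancel]
  change _ ↔ a ≡ 2 [MOD m]
  rw [Nat.ModEq.comm, Nat.modEq_iff_dvd' ha, Nat.dvd_iff_div_mul_eq]
  have hq : (a - 2) / m * m ≤ a - 2 := Nat.div_mul_le_self _ _
  constructor
  · intro hsym
    have hd_gap : (0 : ℤ) * a + (1 : ℕ) * d ∉ HZ (arithSemigroup a d m) := by
      rw [mul_add_mul_mem_HZ_iff hm hcop (by omega)]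
      simp
    have := (frobenius_sub_mem_HZ_iff hm hcop (by omega)).mp ((hsym _).resolve_left hd_gap)
    omega
  · intro hq_eq x
    obtain ⟨k, r, hr, rfl⟩ := exists_eq_mul_add_mul (by omega) hcop x
    rw [mul_add_mul_mem_HZ_iff hm hcop hr, frobenius_sub_mem_HZ_iff hm hcop hr]
    omega

/-- Let `e > 2` and `H = ⟨a, a+d, …, a+(e−1)d⟩` with `a, d` coprime positive
integers and `e ≤ a`. Then `H` is symmetric iff `a ≡ 2 (mod e−1)`. -/
theorem arithmetic_symmetric_iff (e a d : ℕ) (he : 2 < e) (ha : 0 < a)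
    (hd : 0 < d) (hcop : Nat.Coprime a d) (hea : e ≤ a)
    (H : AddSubmonoid ℕ)
    (hH : H = AddSubmonoid.closure (Set.range fun i : Fin e => a + (i : ℕ) * d))
    (F : ℕ) (hF : IsGreatest {x : ℕ | x ∉ H} F) :
    (∀ x : ℤ, x ∈ HZ H ∨ (F : ℤ) - x ∈ HZ H) ↔ a % (e - 1) = 2 % (e - 1) :=
  arithmetic_symmetric_iff_general e a d he hcop hea H hH F hF
end
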